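/- Let 𝔤 be a finite-dimensional simple algebra over a field K (not necessarily associative), with dim(𝔤) = D, and let A ⊆ 𝔤 be a symmetric set generating 𝔤 as an algebra. Let v ∈ 𝔤 be nonzero. Then for every 1 ≤ d ≤ D, the set 𝒯_{≤d}(v, A^{[≤ 2^{D−1}]}) spans a K-vector subspace of dimension at least d. -/
import Mathlib


/-- `z ∈ X^k`: `z` obtained by combining `k` elements of `X` via `+` and `br`. -/
inductive AlgPowB {K : Type*} [Field K] {g : Type*} [AddCommGroup g] [Module K g]
    (br : g →ₗ[K] g →ₗ[K] g) (X : Set g) : ℕ → g → Prop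
  | base {x : g} : x ∈ X → AlgPowB br X 1 x
  | add {j k : ℕ} {x y : g} : AlgPowB br X j x → AlgPowB br X k y →
      AlgPowB br X (j + k) (x + y)
  | node {j k : ℕ} {x y : g} : AlgPowB br X j x → AlgPowB br X k y →
      AlgPowB br X (j + k) (br x y)

/-- `z ∈ X^{[k]}`: pure bracket expressions of length `k`. -/
inductive BrkPowB {K : Type*} [Field K] {g : Type*} [AddCommGroup g] [Module K g]
    (br : g →ₗ[K] g →ₗ[K] g) (X : Set g) : ℕ → g → Prop
  | base {x : g} : x ∈ X → BrkPowB br X 1 x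
  | node {j k : ℕ} {a b : g} : BrkPowB br X j a → BrkPowB br X k b →
      BrkPowB br X (j + k) (br a b)

/-- Towers of height `k` over `Y` (the set `𝒯_k(Y)`). -/
def TowB {K : Type*} [Field K] {g : Type*} [AddCommGroup g] [Module K g]
    (br : g →ₗ[K] g →ₗ[K] g) (Y : Set g) : ℕ → Set g
  | 0 => {0}
  | 1 => Y
  | (k + 2) =>
      Set.image2 (fun a b => br a b) (TowB br Y (k + 1)) Y ∪
        Set.image2 (fun a b => br a b) Y (TowB br Y (k + 1))

/-- `𝒮_k(x,Y)`: bracket expressions of length `k` with one marked entry `x`. -/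
inductive SMarkB {K : Type*} [Field K] {g : Type*} [AddCommGroup g] [Module K g]
    (br : g →ₗ[K] g →ₗ[K] g) (x : g) (Y : Set g) : ℕ → g → Prop
  | base : SMarkB br x Y 1 x
  | left {j k : ℕ} {a b : g} : SMarkB br x Y j a → BrkPowB br Y k b →
      SMarkB br x Y (j + k) (br a b)
  | right {j k : ℕ} {a b : g} : BrkPowB br Y j a → SMarkB br x Y k b →
      SMarkB br x Y (j + k) (br a b)

/-- `𝒯_k(x,Y)`: towers of height `k` with one marked entry `x`. -/
def TMarkB {K : Type*} [Field K] {g : Type*} [AddCommGroup g] [Module K g]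
    (br : g →ₗ[K] g →ₗ[K] g) (x : g) (Y : Set g) : ℕ → Set g
  | 0 => {0}
  | 1 => {x}
  | (k + 2) =>
      Set.image2 (fun a b => br a b) (TMarkB br x Y (k + 1)) Y ∪
        Set.image2 (fun a b => br a b) Y (TMarkB br x Y (k + 1)) ∪
        Set.image2 (fun a b => br a b) (TowB br Y (k + 1)) {x} ∪
        Set.image2 (fun a b => br a b) {x} (TowB br Y (k + 1))


section Aux

variable {K : Type*} [Field K] {g : Type*} [AddCommGroup g] [Module K g]

/-- Span of bracket words of length at most `n`. -/
def WrdSpan (br : g →ₗ[K] g →ₗ[K] g) (A : Set g) (n : ℕ) : Submodule K g :=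
  Submodule.span K {z | ∃ i ≤ n, BrkPowB br A i z}

lemma wrdSpan_mono (br : g →ₗ[K] g →ₗ[K] g) (A : Set g) {n m : ℕ} (h : n ≤ m) :
    WrdSpan br A n ≤ WrdSpan br A m :=
  Submodule.span_mono (fun z ⟨i, hi, hz⟩ => ⟨i, hi.trans h, hz⟩)

lemma wrdSpan_bracket (br : g →ₗ[K] g →ₗ[K] g) (A : Set g) (n m : ℕ) :
    Submodule.map₂ br (WrdSpan br A n) (WrdSpan br A m) ≤ WrdSpan br A (n + m) := by
  rw [WrdSpan, WrdSpan, Submodule.map₂_span_span]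
  apply Submodule.span_le.2
  rintro z ⟨a, ⟨i, hi, ha⟩, b, ⟨j, hj, hb⟩, rfl⟩
  exact Submodule.subset_span ⟨i + j, Nat.add_le_add hi hj, ha.node hb⟩

lemma mem_wrdSpan_of_algPow (br : g →ₗ[K] g →ₗ[K] g) (A : Set g) {k : ℕ} {z : g}
    (h : AlgPowB br A k z) : z ∈ WrdSpan br A k := by
  induction h with
  | base hx => exact Submodule.subset_span ⟨1, le_rfl, .base hx⟩
  | add hx hy ihx ihy =>
      exact add_mem (wrdSpan_mono br A (Nat.le_add_right _ _) ihx)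
        (wrdSpan_mono br A (Nat.le_add_left _ _) ihy)
  | node hx hy ihx ihy =>
      exact wrdSpan_bracket br A _ _ (Submodule.apply_mem_map₂ br ihx ihy)

lemma algPow_mem_of_closed (br : g →ₗ[K] g →ₗ[K] g) (A : Set g) (V : Submodule K g)
    (hA : A ⊆ V) (hbr : Submodule.map₂ br V V ≤ V) {k : ℕ} {z : g}
    (h : AlgPowB br A k z) : z ∈ V := by
  induction h with
  | base hx => exact hA hx
  | add hx hy ihx ihy => exact add_mem ihx ihy
  | node hx hy ihx ihy => exact hbr (Submodule.apply_mem_map₂ br ihx ihy)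

/-- Escape: bracket words of length at most `2^(D-1)` span everything. -/
lemma wrdSpan_top [FiniteDimensional K g] (br : g →ₗ[K] g →ₗ[K] g) (A : Set g)
    (hgen : ∀ z : g, ∃ k : ℕ, AlgPowB br A k z) (v : g) (hv : v ≠ 0) :
    WrdSpan br A (2 ^ (Module.finrank K g - 1)) = ⊤ := by
  have hA1 : ∀ n, 1 ≤ n → A ⊆ (WrdSpan br A n : Set g) := fun n hn x hx =>
    Submodule.subset_span ⟨1, hn, .base hx⟩
  -- if the span doubles to itself, it is everything
  have hstab : ∀ n, 1 ≤ n → WrdSpan br A (n + n) = WrdSpan br A n → WrdSpan br A n = ⊤ := by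
    intro n hn h
    apply eq_top_iff.2
    intro z _
    obtain ⟨k, hk⟩ := hgen z
    exact algPow_mem_of_closed br A _ (hA1 n hn)
      (le_of_le_of_eq (wrdSpan_bracket br A n n) h) hk
  -- W 1 is nonzero
  have hW1 : WrdSpan br A 1 ≠ ⊥ := by
    intro hbot
    have hz : ∀ i z, BrkPowB br A i z → z = 0 := by
      intro i z h
      induction h with
      | base hx =>
          have hm : _ ∈ WrdSpan br A 1 := Submodule.subset_span ⟨1, le_rfl, BrkPowB.base hx⟩
          rw [hbot] at hm
          simpa using hm
      | node ha hb iha ihb => simp [iha, ihb]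
    obtain ⟨k, hk⟩ := hgen v
    refine hv ?_
    have : v ∈ WrdSpan br A k := mem_wrdSpan_of_algPow br A hk
    have hsub : WrdSpan br A k ≤ ⊥ := by
      apply Submodule.span_le.2
      rintro z ⟨i, _, hzi⟩
      simp [hz i z hzi]
    simpa using hsub this
  have hdouble : ∀ k : ℕ, WrdSpan br A (2 ^ k) = ⊤ ∨
      k + 1 ≤ Module.finrank K (WrdSpan br A (2 ^ k)) := by
    intro k
    induction k with
    | zero =>
        right
        have hne : WrdSpan br A (2 ^ 0) ≠ ⊥ := by simpa using hW1
        have : Module.finrank K (WrdSpan br A (2 ^ 0)) ≠ 0 :=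
          fun h => hne (Submodule.finrank_eq_zero.mp h)
        omega
    | succ k ih =>
        rcases ih with h | h
        · left
          apply eq_top_iff.2
          rw [← h]
          exact wrdSpan_mono br A (Nat.pow_le_pow_right (by norm_num) (Nat.le_succ k))
        · by_cases heq : WrdSpan br A (2 ^ (k + 1)) = WrdSpan br A (2 ^ k)
          · left
            have heq' : WrdSpan br A (2 ^ k + 2 ^ k) = WrdSpan br A (2 ^ k) := by
              rw [← two_mul, ← pow_succ']; exact heq
            have := hstab _ (Nat.one_le_two_pow) heq'
            rw [heq]; exact this
          · right
            have hlt : WrdSpan br A (2 ^ k) < WrdSpan br A (2 ^ (k + 1)) :=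
              lt_of_le_of_ne (wrdSpan_mono br A (Nat.pow_le_pow_right (by norm_num)
                (Nat.le_succ k))) (Ne.symm heq)
            have := Submodule.finrank_lt_finrank_of_lt hlt
            omega
  rcases hdouble (Module.finrank K g - 1) with h | h
  · exact h
  · apply Submodule.eq_top_of_finrank_eq
    have hD : 1 ≤ Module.finrank K g := by
      by_contra hc
      have : Module.finrank K g = 0 := by omega
      have hs : Subsingleton g := Module.finrank_zero_iff.mp this
      exact hv (Subsingleton.elim v 0)
    have hle := Submodule.finrank_le (WrdSpan br A (2 ^ (Module.finrank K g - 1)))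
    omega

end Aux

lemma tmark_step {K : Type*} [Field K] {g : Type*} [AddCommGroup g] [Module K g]
    (br : g →ₗ[K] g →ₗ[K] g) (v : g) (Y : Set g) (d : ℕ) :
    Submodule.map₂ br (Submodule.span K (⋃ j ∈ Set.Iic d, TMarkB br v Y j))
        (Submodule.span K Y)
      ≤ Submodule.span K (⋃ j ∈ Set.Iic (d + 1), TMarkB br v Y j) := by
  rw [Submodule.map₂_span_span]
  apply Submodule.span_le.2
  rintro z ⟨a, ha, b, hb, rfl⟩
  apply Submodule.subset_span
  obtain ⟨j, hj, haj⟩ : ∃ j ≤ d, a ∈ TMarkB br v Y j := by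
    simpa using ha
  rcases j with _ | j
  · have ha0 : a = 0 := haj
    subst ha0
    refine Set.mem_biUnion (show (0:ℕ) ∈ Set.Iic (d+1) by simp) ?_
    show br 0 b ∈ TMarkB br v Y 0
    rw [map_zero]
    rfl
  · refine Set.mem_biUnion (show j + 2 ∈ Set.Iic (d+1) from by simp; omega) ?_
    exact Set.mem_union_left _ (Set.mem_union_left _ (Set.mem_union_left _
      (Set.mem_image2_of_mem haj hb)))

lemma tmark_step' {K : Type*} [Field K] {g : Type*} [AddCommGroup g] [Module K g]
    (br : g →ₗ[K] g →ₗ[K] g) (v : g) (Y : Set g) (d : ℕ) :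
    Submodule.map₂ br.flip (Submodule.span K (⋃ j ∈ Set.Iic d, TMarkB br v Y j))
        (Submodule.span K Y)
      ≤ Submodule.span K (⋃ j ∈ Set.Iic (d + 1), TMarkB br v Y j) := by
  rw [Submodule.map₂_span_span]
  apply Submodule.span_le.2
  rintro z ⟨a, ha, b, hb, rfl⟩
  apply Submodule.subset_span
  obtain ⟨j, hj, haj⟩ : ∃ j ≤ d, a ∈ TMarkB br v Y j := by
    simpa using ha
  rcases j with _ | j
  · have ha0 : a = 0 := haj
    subst ha0
    refine Set.mem_biUnion (show (0:ℕ) ∈ Set.Iic (d+1) by simp) ?_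
    show br b 0 ∈ TMarkB br v Y 0
    rw [map_zero]
    rfl
  · refine Set.mem_biUnion (show j + 2 ∈ Set.Iic (d+1) from by simp; omega) ?_
    show br b a ∈ TMarkB br v Y (j + 1 + 1)
    exact Set.mem_union_left _ (Set.mem_union_left _ (Set.mem_union_right _
      (Set.mem_image2_of_mem hb haj)))

/-- For a simple finite-dimensional algebra of dimension `D` and a nonzero `v`,
towers of height at most `d` with one marked entry `v` over `A^{[≤ 2^(D-1)]}`
span a subspace of dimension at least `d`. -/
theorem tmark_span_dim_of_simple {K : Type*} [Field K] {g : Type*}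
    [AddCommGroup g] [Module K g] [FiniteDimensional K g]
    (br : g →ₗ[K] g →ₗ[K] g)
    (hsimple : ∀ V : Submodule K g, V ≠ ⊥ → V ≠ ⊤ →
      ¬(({z | ∃ v ∈ V, ∃ w : g, z = br v w} ∪ {z | ∃ v ∈ V, ∃ w : g, z = br w v})
          ⊆ (V : Set g)))
    (A : Set g) (hfin : A.Finite) (h0 : (0 : g) ∈ A) (hsym : A = -A)
    (hgen : ∀ z : g, ∃ k : ℕ, AlgPowB br A k z)
    (v : g) (hv : v ≠ 0)
    (d : ℕ) (hd1 : 1 ≤ d) (hdD : d ≤ Module.finrank K g) :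
    d ≤ Module.finrank K
        (Submodule.span K (⋃ j ∈ Set.Iic d,
          TMarkB br v
            ({0} ∪ {z | ∃ i ≤ 2 ^ (Module.finrank K g - 1), BrkPowB br A i z}) j)) := by
  set D := Module.finrank K g with hD
  set Y : Set g := {0} ∪ {z | ∃ i ≤ 2 ^ (D - 1), BrkPowB br A i z} with hY
  have hYtop : Submodule.span K Y = ⊤ := by
    apply eq_top_iff.2
    rw [← wrdSpan_top br A hgen v hv]
    exact Submodule.span_mono (fun z hz => Set.mem_union_right _ hz)
  set U : ℕ → Submodule K g := fun d => Submodule.span K (⋃ j ∈ Set.Iic d, TMarkB br v Y j)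
    with hU
  have hvmem : ∀ d, 1 ≤ d → v ∈ U d := by
    intro d hd
    exact Submodule.subset_span (Set.mem_biUnion hd (show v ∈ TMarkB br v Y 1 from rfl))
  have hmono : ∀ d, U d ≤ U (d + 1) := fun d =>
    Submodule.span_mono (Set.biUnion_subset_biUnion_left (fun j hj =>
      le_trans hj (Nat.le_succ d)))
  show d ≤ Module.finrank K (U d)
  clear_value Y
  induction d with
  | zero => omega
  | succ d ih =>
    rcases Nat.eq_zero_or_pos d with rfl | hd
    · -- base case d+1 = 1
      have hne : U 1 ≠ ⊥ := by
        intro hb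
        have := hvmem 1 le_rfl
        rw [hb] at this
        exact hv (by simpa using this)
      have : Module.finrank K (U 1) ≠ 0 := fun h => hne (Submodule.finrank_eq_zero.mp h)
      show 1 ≤ Module.finrank K (U 1)
      omega
    · have ihd : d ≤ Module.finrank K (U d) := ih hd (by omega)
      by_cases htop : U d = ⊤
      · have h1 : U (d + 1) = ⊤ := top_unique (htop ▸ hmono d)
        rw [h1]
        have : Module.finrank K (⊤ : Submodule K g) = D := finrank_top K g
        omega
      · have hlt : U d < U (d + 1) := by
          rcases lt_or_eq_of_le (hmono d) with h | h
          · exact h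
          · exfalso
            refine hsimple (U d) ?_ htop ?_
            · intro hb
              have := hvmem d hd
              rw [hb] at this
              exact hv (by simpa using this)
            · rintro z (⟨x, hx, w, rfl⟩ | ⟨x, hx, w, rfl⟩)
              · have : br x w ∈ U (d + 1) := by
                  apply tmark_step br v Y d
                  exact Submodule.apply_mem_map₂ br hx (by rw [hYtop]; trivial)
                show br x w ∈ U d
                rw [h]; exact this
              · have : br w x ∈ U (d + 1) := by
                  apply tmark_step' br v Y d
                  exact Submodule.apply_mem_map₂ br.flip hx (by rw [hYtop]; trivial)
                show br w x ∈ U d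
                rw [h]; exact this
        have := Submodule.finrank_lt_finrank_of_lt hlt
        omega
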